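/- arXiv:2603.14623 — 3 statements merged into one kernel-verified Lean document; each statement's English description precedes it below -/
import Mathlib

section
/- Let C > 1 and let f : [0,1] → ℝ be concave on [0,1] with f(0) = 0 and 0 ≤ f(u) ≤ 1 for all u ∈ [0,1]. If ∫₀¹ f(u) du ≥ 1 - 1/(2C), then there exists u ∈ (0,1] with f(u) ≥ C·u. -/
open MeasureTheory intervalIntegral Set

/-- **Tight AUC under concavity, part (i)** (Theorem 2(i)). If `C > 1` and `f` is a
concave ROC curve on `[0,1]` with `f 0 = 0`, `0 ≤ f ≤ 1`, and
`∫₀¹ f ≥ 1 - 1/(2C)`, then some `u ∈ (0,1]` satisfies `f(u) ≥ C·u`. -/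
theorem stmt4 (C : ℝ) (hC : 1 < C) (f : ℝ → ℝ)
    (hf : ConcaveOn ℝ (Set.Icc (0:ℝ) 1) f) (h0 : f 0 = 0)
    (hbd : ∀ u ∈ Set.Icc (0:ℝ) 1, 0 ≤ f u ∧ f u ≤ 1)
    (hint : 1 - 1 / (2 * C) ≤ ∫ u in (0:ℝ)..1, f u) :
    ∃ u ∈ Set.Ioc (0:ℝ) 1, C * u ≤ f u := by
  by_contra hcon
  push_neg at hcon
  have hCpos : (0:ℝ) < C := by linarith
  have hC2 : (0:ℝ) < 2 * C := by linarith
  have hsmall : 1 / (2 * C) < 1 := by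
    rw [div_lt_one hC2]; linarith
  have htC : (0:ℝ) < 1 / C := by positivity
  have htC1 : 1 / C < 1 := by
    rw [div_lt_one hCpos]; exact hC
  by_cases hi : IntervalIntegrable f volume 0 1
  · -- compare with g = min (C*x) 1
    set g : ℝ → ℝ := fun u => min (C * u) 1 with hg
    have hgc : Continuous g := (continuous_const.mul continuous_id).min continuous_const
    have hgi : IntervalIntegrable g volume 0 1 := hgc.intervalIntegrable 0 1
    -- f ≤ g on Ioc 0 1
    have hle : ∀ x ∈ Set.Ioc (0:ℝ) 1, f x ≤ g x := by
      intro x hx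
      rcases le_or_gt (C * x) 1 with h | h
      · have := hcon x hx
        simp only [hg, min_eq_left h]
        linarith
      · have := (hbd x ⟨hx.1.le, hx.2⟩).2
        simp only [hg, min_eq_right h.le]
        exact this
    -- strict on Ioc 0 (1/C)
    have hlt : volume.restrict (Set.Ioc (0:ℝ) 1) {x | f x < g x} ≠ 0 := by
      have hsub : Set.Ioc (0:ℝ) (1/C) ⊆ {x | f x < g x} ∩ Set.Ioc (0:ℝ) 1 := by
        intro x hx
        have hx1 : x ∈ Set.Ioc (0:ℝ) 1 := ⟨hx.1, hx.2.trans htC1.le⟩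
        refine ⟨?_, hx1⟩
        have hCx : C * x ≤ 1 := by
          have := hx.2
          calc C * x ≤ C * (1/C) := by nlinarith [hx.2]
            _ = 1 := by field_simp
        simp only [Set.mem_setOf_eq, hg, min_eq_left hCx]
        exact hcon x hx1
      intro h0'
      have : volume ({x | f x < g x} ∩ Set.Ioc (0:ℝ) 1) = 0 := by
        rw [← Measure.restrict_apply' measurableSet_Ioc, h0']
      have hz : volume (Set.Ioc (0:ℝ) (1/C)) = 0 :=
        measure_mono_null hsub this
      rw [Real.volume_Ioc] at hz
      simp only [ENNReal.ofReal_eq_zero] at hz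
      linarith
    have hIlt : (∫ x in (0:ℝ)..1, f x) < ∫ x in (0:ℝ)..1, g x :=
      integral_lt_integral_of_ae_le_of_measure_setOf_lt_ne_zero zero_le_one hi hgi
        ((ae_restrict_iff' measurableSet_Ioc).2 (Filter.Eventually.of_forall hle)) hlt
    -- compute ∫ g = 1 - 1/(2C)
    have hsplit : (∫ x in (0:ℝ)..(1/C), g x) + ∫ x in (1/C:ℝ)..1, g x
        = ∫ x in (0:ℝ)..1, g x :=
      integral_add_adjacent_intervals (hgc.intervalIntegrable _ _) (hgc.intervalIntegrable _ _)
    have h1 : (∫ x in (0:ℝ)..(1/C), g x) = 1 / (2 * C) := by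
      have : (∫ x in (0:ℝ)..(1/C), g x) = ∫ x in (0:ℝ)..(1/C), C * x := by
        apply integral_congr
        intro x hx
        rw [Set.uIcc_of_le htC.le] at hx
        have hCx : C * x ≤ 1 := by
          calc C * x ≤ C * (1/C) := by nlinarith [hx.2]
            _ = 1 := by field_simp
        simp [hg, min_eq_left hCx]
      rw [this, intervalIntegral.integral_const_mul, integral_id]
      field_simp
      ring
    have h2 : (∫ x in (1/C:ℝ)..1, g x) = 1 - 1/C := by
      have : (∫ x in (1/C:ℝ)..1, g x) = ∫ x in (1/C:ℝ)..1, (1:ℝ) := by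
        apply integral_congr
        intro x hx
        rw [Set.uIcc_of_le htC1.le] at hx
        have hCx : 1 ≤ C * x := by
          calc (1:ℝ) = C * (1/C) := by field_simp
            _ ≤ C * x := by nlinarith [hx.1]
        simp [hg, min_eq_right hCx]
      rw [this]; simp
    have : (∫ x in (0:ℝ)..1, g x) = 1 - 1/(2*C) := by
      rw [← hsplit, h1, h2]
      field_simp
      ring
    rw [this] at hIlt
    linarith
  · rw [intervalIntegral.integral_undef hi] at hint
    linarith
end

section
/- Let C > 1. For every ε > 0 there exists a function f : [0,1] → ℝ that is concave on [0,1], satisfies f(0) = 0 and 0 ≤ f(u) ≤ 1 for all u ∈ [0,1], has ∫₀¹ f(u) du > (1 - 1/(2C)) - ε, and satisfies f(u) < C·u for every u ∈ (0,1]. -/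
/-- **Tight AUC under concavity, part (ii)** (Theorem 2(ii)). For `C > 1` and `ε > 0`,
there is a concave `f : [0,1] → ℝ` with `f 0 = 0`, `0 ≤ f ≤ 1` on `[0,1]`,
`∫₀¹ f > (1 - 1/(2C)) - ε`, and `f(u) < C·u` for all `u ∈ (0,1]` (infeasible). -/
theorem stmt5 (C : ℝ) (hC : 1 < C) (ε : ℝ) (hε : 0 < ε) :
    ∃ f : ℝ → ℝ, ConcaveOn ℝ (Set.Icc (0:ℝ) 1) f ∧ f 0 = 0 ∧
      (∀ u ∈ Set.Icc (0:ℝ) 1, 0 ≤ f u ∧ f u ≤ 1) ∧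
      (1 - 1 / (2 * C)) - ε < (∫ u in (0:ℝ)..1, f u) ∧
      (∀ u ∈ Set.Ioc (0:ℝ) 1, f u < C * u) := by
  set δ : ℝ := min ((C - 1) / 2) ε with hδdef
  have hδpos : 0 < δ := lt_min (by linarith) hε
  have hδle : δ ≤ ε := min_le_right _ _
  set L : ℝ := C - δ with hLdef
  have hL1 : 1 < L := by
    have : δ ≤ (C - 1) / 2 := min_le_left _ _
    simp only [hLdef]; linarith
  have hL0 : 0 < L := by linarith
  have hLC : L < C := by simp only [hLdef]; linarith
  refine ⟨fun u => min (L * u) 1, ?_, ?_, ?_, ?_, ?_⟩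
  · have h1 : ConcaveOn ℝ (Set.Icc (0:ℝ) 1) (fun u => L * u) := by
      have := (concaveOn_id (convex_Icc (0:ℝ) 1)).smul (le_of_lt hL0)
      simpa [smul_eq_mul] using this
    have h2 : ConcaveOn ℝ (Set.Icc (0:ℝ) 1) (fun _ : ℝ => (1:ℝ)) :=
      concaveOn_const 1 (convex_Icc 0 1)
    exact h1.inf h2
  · simp
  · intro u hu
    obtain ⟨hu0, hu1⟩ := hu
    constructor
    · exact le_min (mul_nonneg hL0.le hu0) zero_le_one
    · exact min_le_right _ _
  · -- integral: split at 1/L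
    have hinvL : (0:ℝ) < 1 / L := by positivity
    have hinvL1 : 1 / L < 1 := by
      rw [div_lt_one hL0]; exact hL1
    have hsplit : (∫ u in (0:ℝ)..(1/L), min (L * u) 1) + (∫ u in (1/L)..1, min (L * u) 1)
        = ∫ u in (0:ℝ)..1, min (L * u) 1 := by
      apply intervalIntegral.integral_add_adjacent_intervals <;>
      exact ((continuous_const.mul continuous_id).min continuous_const).intervalIntegrable _ _
    have h1 : (∫ u in (0:ℝ)..(1/L), min (L * u) 1) = 1 / (2 * L) := by
      have : (∫ u in (0:ℝ)..(1/L), min (L * u) 1) = ∫ u in (0:ℝ)..(1/L), L * u := by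
        apply intervalIntegral.integral_congr
        intro u hu
        rw [Set.uIcc_of_le hinvL.le] at hu
        have hu2 : u ≤ 1 / L := hu.2
        have : L * u ≤ 1 := by
          calc L * u ≤ L * (1/L) := by nlinarith [hu.1]
          _ = 1 := by field_simp
        simp [min_eq_left this]
      rw [this, intervalIntegral.integral_const_mul, integral_id]
      field_simp
      ring
    have h2 : (∫ u in (1/L)..1, min (L * u) 1) = 1 - 1 / L := by
      have : (∫ u in (1/L)..1, min (L * u) 1) = ∫ u in (1/L)..1, (1:ℝ) := by
        apply intervalIntegral.integral_congr
        intro u hu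
        rw [Set.uIcc_of_le hinvL1.le] at hu
        have : (1:ℝ) ≤ L * u := by
          have := hu.1
          calc (1:ℝ) = L * (1/L) := by field_simp
          _ ≤ L * u := by nlinarith
        simp [min_eq_right this]
      rw [this]; simp
    have hval : (∫ u in (0:ℝ)..1, min (L * u) 1) = 1 - 1 / (2 * L) := by
      rw [← hsplit, h1, h2]; field_simp; ring
    rw [hval]
    -- need (1 - 1/(2C)) - ε < 1 - 1/(2L)
    have hC0 : (0:ℝ) < C := by linarith
    have key : 1 / (2 * L) - 1 / (2 * C) < ε := by
      have h : 1 / (2 * L) - 1 / (2 * C) = δ / (2 * L * C) := by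
        field_simp; ring
      rw [h]
      have h2LC : 1 < 2 * L * C := by nlinarith
      calc δ / (2 * L * C) < δ / 1 := by
            apply div_lt_div_of_pos_left hδpos (by norm_num) h2LC
        _ = δ := div_one δ
        _ ≤ ε := hδle
    linarith
  · intro u hu
    obtain ⟨hu0, hu1⟩ := hu
    calc min (L * u) 1 ≤ L * u := min_le_left _ _
      _ < C * u := by nlinarith
end

section
/- Let L ≥ 1 and let f : [0,1] → ℝ be a measurable function with 0 ≤ f(u) ≤ 1 and f(u) ≤ L·u for all u ∈ [0,1]. Then ∫₀¹ f(u) du ≤ 1 - 1/(2L). -/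
open Set intervalIntegral MeasureTheory

theorem integral_min_mul_one_eq {L : ℝ} (hL : 1 ≤ L) :
    ∫ u in (0:ℝ)..1, min (L * u) 1 = 1 - 1 / (2 * L) := by
  have hL0 : 0 < L := one_pos.trans_le hL
  have hcont : Continuous fun u : ℝ => min (L * u) 1 := by fun_prop
  have h_lin : ∫ u in (0:ℝ)..L⁻¹, min (L * u) 1 = ∫ u in (0:ℝ)..L⁻¹, L * u := by
    refine integral_congr fun u hu => min_eq_left ?_
    rw [uIcc_of_le (inv_nonneg.2 hL0.le)] at hu
    simpa [hL0.ne'] using mul_le_mul_of_nonneg_left hu.2 hL0.le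
  have h_const : ∫ u in L⁻¹..1, min (L * u) 1 = ∫ _ in L⁻¹..1, (1:ℝ) := by
    refine integral_congr fun u hu => min_eq_right ?_
    rw [uIcc_of_le (inv_le_one_of_one_le₀ hL)] at hu
    simpa [hL0.ne'] using mul_le_mul_of_nonneg_left hu.1 hL0.le
  rw [← integral_add_adjacent_intervals (hcont.intervalIntegrable 0 L⁻¹)
    (hcont.intervalIntegrable L⁻¹ 1), h_lin, h_const, intervalIntegral.integral_const_mul,
    integral_id, intervalIntegral.integral_const, smul_eq_mul, mul_one]
  field_simp
  ring

/-- **Key integral estimate in Theorem 2(i)**. If `L ≥ 1` and `f : [0,1] → ℝ` is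
measurable with `0 ≤ f(u) ≤ 1` and `f(u) ≤ L·u` on `[0,1]`, then
`∫₀¹ f ≤ 1 - 1/(2L)` (since `f ≤ min(L·u, 1)` and `∫₀¹ min(L·u,1) du = 1 - 1/(2L)`). -/
theorem stmt18 (L : ℝ) (hL : 1 ≤ L) (f : ℝ → ℝ) (hm : Measurable f)
    (hf : ∀ u ∈ Set.Icc (0:ℝ) 1, 0 ≤ f u ∧ f u ≤ 1 ∧ f u ≤ L * u) :
    (∫ u in (0:ℝ)..1, f u) ≤ 1 - 1 / (2 * L) := by
  have hcont : Continuous fun u : ℝ => min (L * u) 1 := by fun_prop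
  have hf_le : ∀ u ∈ Icc (0:ℝ) 1, f u ≤ min (L * u) 1 :=
    fun u hu => le_min (hf u hu).2.2 (hf u hu).2.1
  have hf_int : IntervalIntegrable f volume 0 1 := by
    refine (hcont.intervalIntegrable 0 1).mono_fun hm.aestronglyMeasurable ?_
    refine ae_restrict_of_forall_mem measurableSet_uIoc fun u hu => ?_
    rw [uIoc_of_le zero_le_one] at hu
    have hu' : u ∈ Icc (0:ℝ) 1 := Ioc_subset_Icc_self hu
    have hf_nonneg : 0 ≤ f u := (hf u hu').1
    simpa only [Real.norm_of_nonneg hf_nonneg, Real.norm_of_nonneg (hf_nonneg.trans (hf_le u hu'))]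
      using hf_le u hu'
  calc (∫ u in (0:ℝ)..1, f u) ≤ ∫ u in (0:ℝ)..1, min (L * u) 1 :=
        integral_mono_on zero_le_one hf_int (hcont.intervalIntegrable 0 1) hf_le
    _ = 1 - 1 / (2 * L) := integral_min_mul_one_eq hL
end
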